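/- Let |0⟩, |1⟩ be the standard basis of ℂ² and |+⟩ = (|0⟩ + |1⟩)/√2. For every p with 0 < p < 1, the two-qubit density matrix σ_p = p |0⟩⟨0| ⊗ |0⟩⟨0| + (1−p) |+⟩⟨+| ⊗ |+⟩⟨+| on ℂ² ⊗ ℂ² is not classically correlated. -/

import Mathlib

open Matrix
open scoped Kronecker ComplexOrder

/-- A density matrix: positive semidefinite with unit trace. -/
def IsDensity {N : Type*} [Fintype N] (ρ : Matrix N N ℂ) : Prop :=
  ρ.PosSemidef ∧ ρ.trace = 1

/-- The rank-one projector `|v⟩⟨v|`. -/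
def proj {N : Type*} (v : N → ℂ) : Matrix N N ℂ :=
  Matrix.vecMulVec v (star v)

/-- `e` is an orthonormal basis of `ℂ^N` (as an indexed family of vectors). -/
def Onb {N : Type*} [Fintype N] [DecidableEq N] (e : N → N → ℂ) : Prop :=
  ∀ i j, (∑ k, star (e i k) * e j k) = if i = j then (1 : ℂ) else 0

def IsUnitary {N : Type*} [Fintype N] [DecidableEq N] (U : Matrix N N ℂ) : Prop :=
  Uᴴ * U = 1 ∧ U * Uᴴ = 1

/-- A product state with respect to the bipartition `α | β`. -/
def IsProduct {α β : Type*} [Fintype α] [Fintype β]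
    (ρ : Matrix (α × β) (α × β) ℂ) : Prop :=
  ∃ (ρA : Matrix α α ℂ) (ρB : Matrix β β ℂ),
    IsDensity ρA ∧ IsDensity ρB ∧ ρ = ρA ⊗ₖ ρB

/-- Classically correlated with respect to the bipartition `α | β`. -/
def IsCC {α β : Type*} [Fintype α] [DecidableEq α] [Fintype β] [DecidableEq β]
    (ρ : Matrix (α × β) (α × β) ℂ) : Prop :=
  ∃ (e : α → α → ℂ) (f : β → β → ℂ) (p : α → β → ℝ),
    Onb e ∧ Onb f ∧ (∀ i j, 0 ≤ p i j) ∧ (∑ i, ∑ j, p i j) = 1 ∧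
    ρ = ∑ i, ∑ j, ((p i j : ℂ)) • (proj (e i) ⊗ₖ proj (f j))

/-- Partial trace over the second tensor factor. -/
noncomputable def ptrace2 {a b : Type*} [Fintype b] (X : Matrix (a × b) (a × b) ℂ) : Matrix a a ℂ :=
  Matrix.of fun i j => ∑ k, X (i, k) (j, k)

/-- Partial trace over the first tensor factor. -/
noncomputable def ptrace1 {a b : Type*} [Fintype a] (X : Matrix (a × b) (a × b) ℂ) : Matrix b b ℂ :=
  Matrix.of fun i j => ∑ k, X (k, i) (k, j)

/-- Apply a Kraus family to a matrix: `σ ↦ Σ_k K_k σ K_k†`. -/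
noncomputable def kraus {N : Type*} [Fintype N] {d : ℕ} (K : Fin d → Matrix N N ℂ)
    (σ : Matrix N N ℂ) : Matrix N N ℂ :=
  ∑ k, K k * σ * (K k)ᴴ

/-- A quantum channel of Kraus rank at most `d`. -/
def IsChannel {N : Type*} [Fintype N] [DecidableEq N] (d : ℕ)
    (Φ : Matrix N N ℂ → Matrix N N ℂ) : Prop :=
  ∃ K : Fin d → Matrix N N ℂ,
    (∑ k, (K k)ᴴ * K k) = 1 ∧ ∀ σ, Φ σ = kraus K σ

/-- The local operation `Φ_A ⊗ Φ_B` determined by two Kraus families. -/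
noncomputable def localKraus {α β : Type*} [Fintype α] [Fintype β] {dA dB : ℕ}
    (KA : Fin dA → Matrix α α ℂ) (KB : Fin dB → Matrix β β ℂ)
    (σ : Matrix (α × β) (α × β) ℂ) : Matrix (α × β) (α × β) ℂ :=
  ∑ k, ∑ l, (KA k ⊗ₖ KB l) * σ * (KA k ⊗ₖ KB l)ᴴ

/-- A local operation of rank at most `d`: `Φ_A ⊗ Φ_B` with both local channels of
Kraus rank at most `d`. -/
def IsLocalOp {α β : Type*} [Fintype α] [DecidableEq α] [Fintype β] [DecidableEq β] (d : ℕ)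
    (Φ : Matrix (α × β) (α × β) ℂ → Matrix (α × β) (α × β) ℂ) : Prop :=
  ∃ (KA : Fin d → Matrix α α ℂ) (KB : Fin d → Matrix β β ℂ),
    (∑ k, (KA k)ᴴ * KA k) = 1 ∧ (∑ l, (KB l)ᴴ * KB l) = 1 ∧
    ∀ σ, Φ σ = localKraus KA KB σ

/-- The potential quantumness of rank `d` associated with the quantumness measure `Q`. -/
noncomputable def PQ {α β : Type*} [Fintype α] [DecidableEq α] [Fintype β] [DecidableEq β]
    (d : ℕ) (Q : Matrix (α × β) (α × β) ℂ → ℝ)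
    (ρ : Matrix (α × β) (α × β) ℂ) : EReal :=
  sSup {x : EReal | ∃ Φ, IsLocalOp d Φ ∧ x = (Q (Φ ρ) : EReal)}

/-- The standard basis vector `|0⟩` of `ℂ²`. -/
noncomputable def ket0 : Fin 2 → ℂ := ![1, 0]

/-- The standard basis vector `|1⟩` of `ℂ²`. -/
noncomputable def ket1 : Fin 2 → ℂ := ![0, 1]

/-- The vector `|+⟩ = (|0⟩ + |1⟩)/√2` of `ℂ²`. -/
noncomputable def ketPlus : Fin 2 → ℂ :=
  ![1 / (Real.sqrt 2 : ℂ), 1 / (Real.sqrt 2 : ℂ)]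

/-- The two-qubit state `σ_p = p |0⟩⟨0| ⊗ |0⟩⟨0| + (1−p) |+⟩⟨+| ⊗ |+⟩⟨+|`. -/
noncomputable def sigmaP (p : ℝ) : Matrix (Fin 2 × Fin 2) (Fin 2 × Fin 2) ℂ :=
  (p : ℂ) • (proj ket0 ⊗ₖ proj ket0) +
    ((1 - p : ℝ) : ℂ) • (proj ketPlus ⊗ₖ proj ketPlus)

/-!
A classically correlated state `ρ = ∑ p_ij |e_i⟩⟨e_i| ⊗ |f_j⟩⟨f_j|` has marginal
`ρ_A = ∑_i (∑_j p_ij) |e_i⟩⟨e_i|`, which is diagonal in the same basis, so `ρ` commutes with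
`ρ_A ⊗ 1`. For `σ_p` this commutator is `p(1-p) [P₀, P₊] ⊗ (P₀ - P₊)`, where `P₀`, `P₊` are the
projectors onto `|0⟩` and `|+⟩`; it is nonzero because these vectors are neither parallel nor
orthogonal.
-/

section Onb

variable {N : Type*} [Fintype N] [DecidableEq N] {e : N → N → ℂ}

lemma proj_mul_proj_of_onb (he : Onb e) (i j : N) :
    proj (e i) * proj (e j) = if i = j then proj (e i) else 0 := by
  ext a b
  have h : ∑ k, (e i a * star (e i k)) * (e j k * star (e j b))
      = (∑ k, star (e i k) * e j k) * (e i a * star (e j b)) := by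
    rw [Finset.sum_mul]
    exact Finset.sum_congr rfl fun k _ => by ring
  simp only [proj, Matrix.mul_apply, Matrix.vecMulVec_apply, Pi.star_apply]
  rw [h, he i j]
  split_ifs with hij
  · subst hij; simp [Matrix.vecMulVec_apply]
  · simp

lemma commute_proj_of_onb (he : Onb e) (i j : N) : Commute (proj (e i)) (proj (e j)) := by
  by_cases hij : i = j
  · subst hij; exact Commute.refl _
  · unfold Commute SemiconjBy
    rw [proj_mul_proj_of_onb he, proj_mul_proj_of_onb he, if_neg hij, if_neg (Ne.symm hij)]

lemma trace_proj_of_onb (he : Onb e) (i : N) : (proj (e i)).trace = 1 := by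
  simpa [proj, dotProduct, mul_comm] using he i i

end Onb

section Kronecker

variable {R : Type*}

lemma sub_kronecker {l m n p : Type*} [Ring R] (A B : Matrix l m R) (C : Matrix n p R) :
    (A - B) ⊗ₖ C = A ⊗ₖ C - B ⊗ₖ C := by
  ext; simp [sub_mul]

lemma kronecker_sub {l m n p : Type*} [Ring R] (A : Matrix l m R) (B C : Matrix n p R) :
    A ⊗ₖ (B - C) = A ⊗ₖ B - A ⊗ₖ C := by
  ext; simp [mul_sub]

lemma Commute.kronecker_one_left {m n : Type*} [CommSemiring R] [Fintype m] [Fintype n]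
    [DecidableEq n] {A B : Matrix m m R} (h : Commute A B) (C : Matrix n n R) :
    Commute (A ⊗ₖ (1 : Matrix n n R)) (B ⊗ₖ C) := by
  unfold Commute SemiconjBy
  rw [← mul_kronecker_mul, ← mul_kronecker_mul, h.eq, one_mul, mul_one]

lemma commutator_mixture_kronecker_one {n : Type*} [CommRing R] [Fintype n] [DecidableEq n]
    (p r : R) (P Q : Matrix n n R) :
    (p • (P ⊗ₖ P) + r • (Q ⊗ₖ Q)) * ((p • P + r • Q) ⊗ₖ (1 : Matrix n n R))
      - ((p • P + r • Q) ⊗ₖ (1 : Matrix n n R)) * (p • (P ⊗ₖ P) + r • (Q ⊗ₖ Q))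
      = (p * r) • ((P * Q - Q * P) ⊗ₖ (P - Q)) := by
  simp only [add_kronecker, smul_kronecker, add_mul, mul_add, smul_mul_smul_comm,
    ← mul_kronecker_mul, mul_one, one_mul, sub_kronecker, kronecker_sub]
  module

end Kronecker

section ptrace2

variable {a b : Type*} [Fintype b]

lemma ptrace2_add (X Y : Matrix (a × b) (a × b) ℂ) :
    ptrace2 (X + Y) = ptrace2 X + ptrace2 Y := by
  ext i j; simp [ptrace2, Finset.sum_add_distrib]

lemma ptrace2_smul (c : ℂ) (X : Matrix (a × b) (a × b) ℂ) :
    ptrace2 (c • X) = c • ptrace2 X := by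
  ext i j; simp [ptrace2, Finset.mul_sum]

lemma ptrace2_sum {ι : Type*} (s : Finset ι) (X : ι → Matrix (a × b) (a × b) ℂ) :
    ptrace2 (∑ i ∈ s, X i) = ∑ i ∈ s, ptrace2 (X i) := by
  ext i j; simp [ptrace2, Matrix.sum_apply, Finset.sum_comm (s := s)]

lemma ptrace2_kronecker (A : Matrix a a ℂ) (B : Matrix b b ℂ) :
    ptrace2 (A ⊗ₖ B) = B.trace • A := by
  ext i j; simp [ptrace2, Matrix.trace, Finset.mul_sum, mul_comm]

end ptrace2

lemma ptrace2_sum_smul_kronecker_proj {α β : Type*} [Fintype α] [Fintype β] [DecidableEq β]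
    (e : α → α → ℂ) {f : β → β → ℂ} (hf : Onb f) (q : α → β → ℝ) :
    ptrace2 (∑ i, ∑ j, ((q i j : ℂ)) • (proj (e i) ⊗ₖ proj (f j)))
      = ∑ i, (∑ j, (q i j : ℂ)) • proj (e i) := by
  simp only [ptrace2_sum, ptrace2_smul, ptrace2_kronecker, trace_proj_of_onb hf, one_smul,
    Finset.sum_smul]

theorem IsCC.commute_ptrace2_kronecker_one {α β : Type*} [Fintype α] [DecidableEq α] [Fintype β]
    [DecidableEq β] {ρ : Matrix (α × β) (α × β) ℂ} (hρ : IsCC ρ) :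
    Commute ρ (ptrace2 ρ ⊗ₖ (1 : Matrix β β ℂ)) := by
  obtain ⟨e, f, q, he, hf, -, -, rfl⟩ := hρ
  rw [ptrace2_sum_smul_kronecker_proj e hf]
  have hmarginal : ∀ i, Commute (proj (e i)) (∑ k, (∑ j, (q k j : ℂ)) • proj (e k)) := fun i =>
    Commute.sum_right _ _ _ fun k _ => (commute_proj_of_onb he i k).smul_right _
  refine Commute.sum_left _ _ _ fun i _ => Commute.sum_left _ _ _ fun j _ => ?_
  exact (((hmarginal i).symm.kronecker_one_left _).symm).smul_left _

lemma proj_ket0 : proj ket0 = !![1, 0; 0, 0] := by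
  ext i j
  fin_cases i <;> fin_cases j <;>
    simp [proj, ket0, vecMulVec_apply, -cons_vecMulVec, -vecMulVec_cons]

lemma proj_ketPlus : proj ketPlus = !![1 / 2, 1 / 2; 1 / 2, 1 / 2] := by
  have hsqrt : ((√2 : ℝ) : ℂ) * ((√2 : ℝ) : ℂ) = 2 := by
    rw [← Complex.ofReal_mul, Real.mul_self_sqrt zero_le_two]; norm_num
  ext i j
  fin_cases i <;> fin_cases j <;>
    simp [proj, ketPlus, vecMulVec_apply, -cons_vecMulVec, -vecMulVec_cons, ← mul_inv, hsqrt]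

lemma ptrace2_sigmaP (p : ℝ) :
    ptrace2 (sigmaP p) = (p : ℂ) • proj ket0 + ((1 - p : ℝ) : ℂ) • proj ketPlus := by
  have h0 : (proj ket0).trace = 1 := by simp [proj_ket0, trace_fin_two]
  have hplus : (proj ketPlus).trace = 1 := by rw [proj_ketPlus, trace_fin_two_of]; norm_num
  simp only [sigmaP, ptrace2_add, ptrace2_smul, ptrace2_kronecker, h0, hplus, one_smul]

lemma commutator_proj_ket0_ketPlus_kronecker_ne_zero :
    (proj ket0 * proj ketPlus - proj ketPlus * proj ket0) ⊗ₖ (proj ket0 - proj ketPlus) ≠ 0 := by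
  intro h
  have h01 := congrFun (congrFun h (0, 0)) (1, 0)
  rw [proj_ket0, proj_ketPlus] at h01
  norm_num [Matrix.mul_apply, Fin.sum_univ_two] at h01

/-- For every `0 < p < 1`, the two-qubit state
`σ_p = p |0⟩⟨0| ⊗ |0⟩⟨0| + (1−p) |+⟩⟨+| ⊗ |+⟩⟨+|` is not classically correlated. -/
theorem statement6 (p : ℝ) (hp0 : 0 < p) (hp1 : p < 1) :
    ¬ IsCC (sigmaP p) := by
  intro hcc
  have hcomm := hcc.commute_ptrace2_kronecker_one
  rw [ptrace2_sigmaP] at hcomm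
  have hzero :=
    commutator_mixture_kronecker_one (p : ℂ) ((1 - p : ℝ) : ℂ) (proj ket0) (proj ketPlus)
  rw [← sigmaP, hcomm.eq, sub_self, eq_comm, smul_eq_zero] at hzero
  rcases hzero with hp | hne
  · have : p * (1 - p) ≠ 0 := (mul_pos hp0 (sub_pos.mpr hp1)).ne'
    exact this (by exact_mod_cast hp)
  · exact commutator_proj_ket0_ketPlus_kronecker_ne_zero hne
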